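/- arXiv:1007.2870 — 11 statements merged into one kernel-verified Lean document; each statement's English description precedes it below -/
import Mathlib

section
/- For every n ≥ 2, the map sending a pair (q, j), where q is a list that is a permutation of List.range (n-1) and j ∈ {0,1,…,n-1}, to the list List.rotate (q ++ [n-1]) j, is a bijection onto the set of lists that are permutations of List.range n. -/
open List

lemma aux_perm {n : ℕ} {q : List ℕ} (hq : q.Perm (List.range (n-1))) (hn : 2 ≤ n) :
    (q ++ [n-1]).Perm (List.range n) := by
  have h : List.range n = List.range (n-1) ++ [n-1] := by
    conv_lhs => rw [show n = (n-1) + 1 by omega, List.range_succ]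
  rw [h]
  exact hq.append_right _

lemma aux_getElem {n : ℕ} {q : List ℕ} (hq : q.Perm (List.range (n-1)))
    {k : ℕ} (hk : k < (q ++ [n-1]).length) (h : (q ++ [n-1])[k] = n - 1) : k = n - 1 := by
  have hlen : q.length = n - 1 := by simpa using hq.length_eq
  by_contra hne
  have hk' : k < q.length := by simp [hlen] at hk ⊢; omega
  rw [List.getElem_append_left hk'] at h
  have : q[k] ∈ List.range (n-1) := hq.subset (List.getElem_mem _)
  rw [List.mem_range] at this
  omega

theorem cyclic_shift_bijection (n : ℕ) (hn : 2 ≤ n) :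
    Set.BijOn (fun qj : List ℕ × ℕ => List.rotate (qj.1 ++ [n - 1]) qj.2)
      {qj : List ℕ × ℕ | qj.1.Perm (List.range (n - 1)) ∧ qj.2 < n}
      {p : List ℕ | p.Perm (List.range n)} := by
  refine ⟨?_, ?_, ?_⟩
  · rintro ⟨q, j⟩ ⟨hq, hj⟩
    exact ((q ++ [n-1]).rotate_perm j).trans (aux_perm hq hn)
  · rintro ⟨q1, j1⟩ ⟨hq1, hj1⟩ ⟨q2, j2⟩ ⟨hq2, hj2⟩ h
    simp only at h hq1 hq2 hj1 hj2
    have hl1 : q1.length = n - 1 := by simpa using hq1.length_eq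
    have hl2 : q2.length = n - 1 := by simpa using hq2.length_eq
    have hL1 : (q1 ++ [n-1]).length = n := by simp [hl1]; omega
    have hL2 : (q2 ++ [n-1]).length = n := by simp [hl2]; omega
    set i := (n - 1 - j1) % n with hi
    have hin : i < n := Nat.mod_lt _ (by omega)
    have hmod1 : (i + j1) % n = n - 1 := by
      rw [hi, Nat.mod_add_mod, show n - 1 - j1 + j1 = n - 1 by omega,
        Nat.mod_eq_of_lt (by omega)]
    have hir : i < ((q1 ++ [n-1]).rotate j1).length := by rw [length_rotate, hL1]; exact hin
    have e1 := List.getElem_rotate (q1 ++ [n-1]) j1 i hir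
    have e2 := List.getElem_rotate (q2 ++ [n-1]) j2 i
      (by rw [length_rotate, hL2]; exact hin)
    have eh := List.getElem_of_eq h hir
    -- eh : ((q1++[n-1]).rotate j1)[i] = ((q2++[n-1]).rotate j2)[i]
    rw [e1, e2] at eh
    have hval : (q1 ++ [n-1])[(i + j1) % (q1 ++ [n-1]).length]'(by
        rw [hL1]; exact Nat.mod_lt _ (by omega)) = n - 1 := by
      have hidx1 : (i + j1) % (q1 ++ [n-1]).length = n - 1 := by rw [hL1]; exact hmod1
      simp only [hidx1]
      rw [List.getElem_append_right (by omega)]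
      simp [hl1]
    rw [hval] at eh
    have hidx2 := aux_getElem (n:=n) hq2 (by rw [hL2]; exact Nat.mod_lt _ (by omega)) eh.symm
    have hj : j1 = j2 := by
      have h2 : (i + j2) % n = n - 1 := by rwa [hL2] at hidx2
      have hme : (i + j1) ≡ (i + j2) [MOD n] := hmod1.trans h2.symm
      have := Nat.ModEq.add_left_cancel' i hme
      rwa [Nat.ModEq, Nat.mod_eq_of_lt hj1, Nat.mod_eq_of_lt hj2] at this
    subst hj
    rw [List.rotate_eq_rotate] at h
    have := List.append_cancel_right h
    simp [this]
  · rintro p hp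
    simp only [Set.mem_setOf_eq] at hp
    have hlen : p.length = n := by simpa using hp.length_eq
    have hmem : n - 1 ∈ p := hp.mem_iff.2 (by simp; omega)
    set i := p.idxOf (n-1) with hidef
    have hi : i < n := by rw [← hlen]; exact List.idxOf_lt_length_iff.2 hmem
    have hget : p[i]'(by omega) = n - 1 := List.getElem_idxOf _
    have hllen : (p.rotate (i+1)).length = n := by simp [hlen]
    have hlne : p.rotate (i+1) ≠ [] := by
      intro h; rw [h] at hllen; simp at hllen; omega
    have hlast : (p.rotate (i+1))[n-1]'(by omega) = n - 1 := by
      rw [List.getElem_rotate]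
      have hidx : (n - 1 + (i + 1)) % p.length = i := by
        rw [hlen, show n - 1 + (i+1) = n + i by omega, Nat.add_mod_left,
          Nat.mod_eq_of_lt hi]
      simp only [hidx]
      exact hget
    set q := (p.rotate (i+1)).dropLast with hq
    have hql : q.length = n - 1 := by simp [hq, hllen]
    have hdecomp : p.rotate (i+1) = q ++ [n-1] := by
      conv_lhs => rw [← List.dropLast_append_getLast hlne]
      congr 1
      rw [List.getLast_eq_getElem]
      have h1 : (p.rotate (i+1)).length - 1 = n - 1 := by omega
      simp only [h1, hlast]
    refine ⟨⟨q, n - (i+1)⟩, ⟨?_, by omega⟩, ?_⟩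
    · have h1 : (q ++ [n-1]).Perm (List.range n) := by
        rw [← hdecomp]; exact (p.rotate_perm _).trans hp
      have h2 : (List.range (n-1) ++ [n-1]).Perm (List.range n) :=
        aux_perm (List.Perm.refl _) hn
      have h3 : ((n-1) :: q).Perm ((n-1) :: List.range (n-1)) :=
        ((List.perm_append_singleton _ _).symm.trans (h1.trans h2.symm)).trans
          (List.perm_append_singleton _ _)
      exact h3.cons_inv
    · simp only
      rw [← hdecomp, List.rotate_rotate, show i + 1 + (n - (i+1)) = n by omega,
        ← hlen, List.rotate_length]
end

section
/- For every n ≥ 1, the map α ↦ w(n,α) is a bijection from {0,1,…,n!-1} onto the set of lists that are permutations of List.range n. That is, for each α < n! the list w(n,α) is a permutation of List.range n, the map is injective on {0,…,n!-1}, and every permutation of List.range n equals w(n,α) for some α < n!. -/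
/-- The rank-to-permutation map of the cyclic-shift generation order. -/
def w : ℕ → ℕ → List ℕ
  | 0, _ => []
  | 1, _ => [0]
  | n + 2, α => List.rotate (w (n + 1) (α / (n + 2)) ++ [n + 1]) (α % (n + 2))

/-- The inverse (ranking) map. -/
def rk : ℕ → List ℕ → ℕ
  | 0, _ => 0
  | 1, _ => 0
  | n + 2, p =>
    rk (n + 1) ((p.rotate ((n + 2) - ((n + 1) - List.idxOf (n + 1) p))).dropLast) * (n + 2)
      + ((n + 1) - List.idxOf (n + 1) p)

lemma w_key (n : ℕ) :
    (∀ α < (n + 1).factorial,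
      (w (n + 1) α).Perm (List.range (n + 1)) ∧ rk (n + 1) (w (n + 1) α) = α) ∧
    (∀ p : List ℕ, p.Perm (List.range (n + 1)) →
      rk (n + 1) p < (n + 1).factorial ∧ w (n + 1) (rk (n + 1) p) = p) := by
  induction n with
  | zero =>
    constructor
    · intro α hα
      have hα1 : α < 1 := by simpa [Nat.factorial] using hα
      have hα0 : α = 0 := by omega
      subst hα0
      exact ⟨by decide, by decide⟩
    · intro p hp
      rw [show List.range (0 + 1) = [0] by decide, List.perm_singleton] at hp
      subst hp
      exact ⟨by decide, by decide⟩
  | succ n ih =>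
    obtain ⟨ih1, ih2⟩ := ih
    have hNfact : (n + 2).factorial = (n + 2) * (n + 1).factorial := Nat.factorial_succ (n + 1)
    constructor
    · intro α hα
      set q := α / (n + 2) with hqdef
      set k := α % (n + 2) with hkdef
      have hk : k < n + 2 := Nat.mod_lt _ (by omega)
      have hq : q < (n + 1).factorial := by
        rw [hqdef, Nat.div_lt_iff_lt_mul (by omega : 0 < n + 2), Nat.mul_comm]
        rw [hNfact] at hα
        exact hα
      obtain ⟨hlp, hlr⟩ := ih1 q hq
      have hlen : (w (n + 1) q).length = n + 1 := by
        rw [hlp.length_eq, List.length_range]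
      have hweq : w (n + 2) α = (w (n + 1) q ++ [n + 1]).rotate k := rfl
      have hlm : (w (n + 1) q ++ [n + 1]).length = n + 2 := by simp [hlen]
      have hkm : k ≤ n + 1 := by omega
      constructor
      · rw [hweq]
        refine (List.rotate_perm _ _).trans ?_
        rw [show (n + 2) = (n + 1) + 1 from rfl, List.range_succ]
        exact hlp.append_right [n + 1]
      · have hnotmem : (n + 1) ∉ (w (n + 1) q).drop k := by
          intro hmem
          have : (n + 1) ∈ List.range (n + 1) := hlp.mem_iff.mp (List.mem_of_mem_drop hmem)
          simp [List.mem_range] at this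
        have hrot : w (n + 2) α
            = (w (n + 1) q).drop k ++ ([n + 1] ++ (w (n + 1) q).take k) := by
          rw [hweq, List.rotate_eq_drop_append_take (by omega : k ≤ (w (n + 1) q ++ [n + 1]).length),
            List.drop_append_of_le_length (by omega), List.take_append_of_le_length (by omega),
            List.append_assoc]
        have hidx : List.idxOf (n + 1) (w (n + 2) α) = n + 1 - k := by
          rw [hrot, List.idxOf_append_of_notMem hnotmem, List.length_drop, hlen]
          simp [List.idxOf_cons_self]
        have hrkeq : rk (n + 2) (w (n + 2) α)
            = rk (n + 1) (((w (n + 2) α).rotate ((n + 2) - k)).dropLast) * (n + 2) + k := by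
          rw [rk, hidx, show n + 1 - (n + 1 - k) = k by omega]
        have hrotlen : (w (n + 1) q ++ [n + 1]).rotate (n + 2) = w (n + 1) q ++ [n + 1] := by
          conv_lhs => rw [← hlm]
          exact List.rotate_length _
        rw [hrkeq, hweq, List.rotate_rotate, show k + (n + 2 - k) = n + 2 by omega,
          hrotlen, List.dropLast_concat, hlr]
        rw [hqdef, hkdef, Nat.mul_comm]
        exact Nat.div_add_mod α (n + 2)
    · intro p hp
      have hN : p.length = n + 2 := by rw [hp.length_eq, List.length_range]
      have hm : (n + 1) ∈ p := hp.mem_iff.mpr (by simp [List.mem_range])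
      have hj : List.idxOf (n + 1) p < n + 2 := by
        rw [← hN]; exact List.idxOf_lt_length_iff.mpr hm
      set k := n + 1 - List.idxOf (n + 1) p with hk
      have hkm : k ≤ n + 1 := by omega
      have hQlen : (p.rotate (n + 2 - k)).length = n + 2 := by rw [List.length_rotate, hN]
      have hQne : p.rotate (n + 2 - k) ≠ [] := by
        intro h; rw [h] at hQlen; simp at hQlen
      have hlast : (p.rotate (n + 2 - k)).getLast hQne = n + 1 := by
        rw [List.getLast_eq_getElem, List.getElem_rotate]
        have hidx2 : ((p.rotate (n + 2 - k)).length - 1 + (n + 2 - k)) % p.length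
            = List.idxOf (n + 1) p := by
          rw [hQlen, hN,
            show n + 2 - 1 + (n + 2 - k) = (n + 2) + List.idxOf (n + 1) p by omega,
            Nat.add_mod_left, Nat.mod_eq_of_lt (by omega)]
        simp only [hidx2]
        exact List.getElem_idxOf (by omega)
      have hQeq : p.rotate (n + 2 - k) = (p.rotate (n + 2 - k)).dropLast ++ [n + 1] := by
        conv_lhs => rw [← List.dropLast_append_getLast hQne]
        rw [hlast]
      have hl' : ((p.rotate (n + 2 - k)).dropLast).Perm (List.range (n + 1)) := by
        have h1 : ((p.rotate (n + 2 - k)).dropLast ++ [n + 1]).Perm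
            (List.range (n + 1) ++ [n + 1]) := by
          rw [← hQeq, ← List.range_succ]
          exact (List.rotate_perm p (n + 2 - k)).trans hp
        exact (List.perm_append_right_iff [n + 1]).mp h1
      obtain ⟨hβ, hwβ⟩ := ih2 _ hl'
      set β := rk (n + 1) ((p.rotate (n + 2 - k)).dropLast) with hβdef
      have hrkp : rk (n + 2) p = β * (n + 2) + k := by
        rw [rk, ← hk]
      have hdiv : (β * (n + 2) + k) / (n + 2) = β := by
        rw [Nat.mul_comm, Nat.mul_add_div (by omega), Nat.div_eq_of_lt (by omega), Nat.add_zero]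
      have hmod : (β * (n + 2) + k) % (n + 2) = k := by
        rw [Nat.mul_comm, Nat.mul_add_mod, Nat.mod_eq_of_lt (by omega)]
      constructor
      · rw [hrkp, hNfact]
        have h1 : β + 1 ≤ (n + 1).factorial := hβ
        calc β * (n + 2) + k < (β + 1) * (n + 2) := by nlinarith
          _ ≤ (n + 1).factorial * (n + 2) := Nat.mul_le_mul_right _ h1
          _ = (n + 2) * (n + 1).factorial := Nat.mul_comm _ _
      · rw [hrkp]
        show (w (n + 1) ((β * (n + 2) + k) / (n + 2)) ++ [n + 1]).rotate
          ((β * (n + 2) + k) % (n + 2)) = p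
        rw [hdiv, hmod, hwβ, ← hQeq, List.rotate_rotate,
          show (n + 2 - k) + k = n + 2 by omega, ← hN, List.rotate_length]

theorem w_bijection (n : ℕ) (hn : 1 ≤ n) :
    (∀ α < n.factorial, (w n α).Perm (List.range n)) ∧
    Set.InjOn (w n) {α | α < n.factorial} ∧
    (∀ p : List ℕ, p.Perm (List.range n) → ∃ α < n.factorial, w n α = p) := by
  obtain ⟨m, rfl⟩ : ∃ m, n = m + 1 := ⟨n - 1, by omega⟩
  obtain ⟨h1, h2⟩ := w_key m
  refine ⟨fun α hα => (h1 α hα).1, ?_, fun p hp => ?_⟩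
  · intro a ha b hb hab
    have := (h1 a ha).2
    rw [hab, (h1 b hb).2] at this
    exact this.symm
  · exact ⟨rk (m + 1) p, (h2 p hp).1, (h2 p hp).2⟩
end

section
/- For every n ≥ 2, every k with 0 ≤ k ≤ n-2, and every natural number α < n!, setting β = α / ϖ(n,k) and γ = α mod ϖ(n,k), one has: α = β·ϖ(n,k) + γ, β < (n-k)!, digit(n-k, i, β) = digit(n, i+k, α) for every i with 0 ≤ i ≤ n-k-2, and digit(n, i, γ) = digit(n, i, α) for every i with 0 ≤ i ≤ k-1. -/
/-- The `i`-th digit of `α` in the ϖ-system on `n` symbols. -/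
def piDigit (n i α : ℕ) : ℕ := (α / Nat.descFactorial n i) % (n - i)

theorem beta_gamma_decomposition (n : ℕ) (hn : 2 ≤ n) (k : ℕ) (hk : k ≤ n - 2)
    (α : ℕ) (hα : α < n.factorial) :
    α = (α / Nat.descFactorial n k) * Nat.descFactorial n k + α % Nat.descFactorial n k ∧
    α / Nat.descFactorial n k < (n - k).factorial ∧
    (∀ i ≤ n - k - 2, piDigit (n - k) i (α / Nat.descFactorial n k) = piDigit n (i + k) α) ∧
    (∀ i < k, piDigit n i (α % Nat.descFactorial n k) = piDigit n i α) := by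
  have hkn : k ≤ n := by omega
  have hpos : 0 < Nat.descFactorial n k := by
    exact Nat.pos_of_ne_zero fun h => by rw [Nat.descFactorial_eq_zero_iff_lt] at h; omega
  refine ⟨(Nat.div_add_mod' α _).symm, ?_, ?_, ?_⟩
  · rw [Nat.div_lt_iff_lt_mul hpos, Nat.factorial_mul_descFactorial hkn]
    exact hα
  · intro i hi
    unfold piDigit
    rw [Nat.div_div_eq_div_mul]
    have h1 : Nat.descFactorial n k * Nat.descFactorial (n - k) i
        = Nat.descFactorial n (i + k) := by
      have := Nat.descFactorial_mul_descFactorial (k := k) (m := i + k) (n := n) (by omega)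
      simpa [Nat.add_sub_cancel, Nat.mul_comm] using this
    rw [h1, show n - k - i = n - (i + k) by omega]
  · intro i hi
    unfold piDigit
    obtain ⟨c, hc⟩ : (n - i) ∣ Nat.descFactorial (n - i) (k - i) := by
      have h := Nat.descFactorial_mul_descFactorial (k := 1) (m := k - i) (n := n - i) (by omega)
      rw [Nat.descFactorial_one] at h
      exact Dvd.intro_left _ h
    have h1 : Nat.descFactorial n i * Nat.descFactorial (n - i) (k - i)
        = Nat.descFactorial n k := by
      have := Nat.descFactorial_mul_descFactorial (k := i) (m := k) (n := n) (le_of_lt hi)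
      simpa [Nat.mul_comm] using this
    have hip : 0 < Nat.descFactorial n i := by
      exact Nat.pos_of_ne_zero fun h => by rw [Nat.descFactorial_eq_zero_iff_lt] at h; omega
    conv_rhs => rw [← Nat.div_add_mod α (Nat.descFactorial n k)]
    rw [← h1, hc,
      show Nat.descFactorial n i * ((n - i) * c) * (α / (Nat.descFactorial n i * ((n - i) * c)))
        = Nat.descFactorial n i *
          ((n - i) * (α / (Nat.descFactorial n i * ((n - i) * c)) * c)) by ring,
      Nat.mul_add_div hip, Nat.mul_add_mod]
end

section
/- For every n ≥ 2, every k with 1 ≤ k ≤ n-1, and every natural number β < (n-k)!, the first element of the k-orbit of rank β satisfies w(n, β·ϖ(n,k)) = w(n-k, β) ++ [n-k, n-k+1, …, n-1]. -/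
theorem first_element_of_k_orbit (n : ℕ) (hn : 2 ≤ n) (k : ℕ) (hk1 : 1 ≤ k) (hk2 : k ≤ n - 1)
    (β : ℕ) (hβ : β < (n - k).factorial) :
    w n (β * Nat.descFactorial n k) = w (n - k) β ++ List.range' (n - k) k := by
  induction k generalizing n β with
  | zero => omega
  | succ k ih =>
    obtain ⟨m, rfl⟩ : ∃ m, n = m + 2 := ⟨n - 2, by omega⟩
    have hd : Nat.descFactorial (m + 2) (k + 1) = (m + 2) * Nat.descFactorial (m + 1) k :=
      Nat.succ_descFactorial_succ (m + 1) k
    have hrot : w (m + 2) (β * Nat.descFactorial (m + 2) (k + 1)) =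
        w (m + 1) (β * Nat.descFactorial (m + 1) k) ++ [m + 1] := by
      rw [w, hd, show β * ((m + 2) * Nat.descFactorial (m + 1) k)
          = (β * Nat.descFactorial (m + 1) k) * (m + 2) by ring,
        Nat.mul_mod_left, Nat.mul_div_cancel _ (show 0 < m + 2 by omega), List.rotate_zero]
    rcases Nat.eq_zero_or_pos k with rfl | hk
    · rw [hrot, Nat.descFactorial_zero, Nat.mul_one]
      rfl
    · have ih' := ih (m + 1) (by omega) hk (by omega) β
        (by rw [show m + 1 - k = m + 2 - (k + 1) by omega]; exact hβ)
      rw [hrot, ih', show m + 2 - (k + 1) = m + 1 - k by omega, List.append_assoc]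
      congr 1
      rw [show [m + 1] = [m + 1 - k + k] by congr 1; omega, ← List.range'_1_concat]
end

section
/- For every n ≥ 2, every k with 1 ≤ k ≤ n-1, and every natural number β < (n-k)!, the last element of the k-orbit of rank β satisfies w(n, β·ϖ(n,k) + ϖ(n,k) - 1) = [n-1, n-2, …, n-k] ++ w(n-k, β). -/
lemma w_length (n : ℕ) : ∀ α, (w n α).length = n := by
  induction n using Nat.strong_induction_on with
  | _ n ih =>
    match n with
    | 0 => intro α; rfl
    | 1 => intro α; rfl
    | n + 2 =>
      intro α
      rw [w, List.length_rotate, List.length_append, ih (n + 1) (by omega)]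
      rfl

lemma rotate_last (l : List ℕ) (x : ℕ) : (l ++ [x]).rotate l.length = x :: l := by
  rw [List.rotate_eq_drop_append_take (by simp), List.drop_left, List.take_left]
  rfl

lemma main_aux : ∀ k n β, 2 ≤ n → k + 1 ≤ n - 1 → β < (n - (k + 1)).factorial →
    w n (β * Nat.descFactorial n (k + 1) + Nat.descFactorial n (k + 1) - 1) =
      (List.range' (n - (k + 1)) (k + 1)).reverse ++ w (n - (k + 1)) β := by
  intro k
  induction k with
  | zero =>
    intro n β hn hk2 hβ
    obtain ⟨m, rfl⟩ : ∃ m, n = m + 2 := ⟨n - 2, by omega⟩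
    have hD : Nat.descFactorial (m + 2) 1 = m + 2 := by simp
    rw [hD]
    have hα : β * (m + 2) + (m + 2) - 1 = (m + 2) * β + (m + 1) := by ring_nf; omega
    rw [w, hα, Nat.mul_add_div (by omega), Nat.mul_add_mod,
      Nat.mod_eq_of_lt (by omega : m + 1 < m + 2),
      Nat.div_eq_of_lt (by omega : m + 1 < m + 2)]
    simp only [Nat.add_zero]
    have hrot := rotate_last (w (m + 1) β) (m + 1)
    rw [w_length] at hrot
    rw [hrot]
    simp [show m + 2 - (0 + 1) = m + 1 by omega]
  | succ k ihk =>
    intro n β hn hk2 hβ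
    obtain ⟨m, rfl⟩ : ∃ m, n = m + 2 := ⟨n - 2, by omega⟩
    have hm : k + 1 ≤ m := by omega
    have hβ' : β < (m + 1 - (k + 1)).factorial := by
      rw [show m + 1 - (k + 1) = m + 2 - (k + 1 + 1) from by omega]; exact hβ
    have hih := ihk (m + 1) β (show 2 ≤ m + 1 by omega) (show k + 1 ≤ m + 1 - 1 by omega) hβ'
    have hd : 1 ≤ Nat.descFactorial (m + 1) (k + 1) := by
      rcases Nat.eq_zero_or_pos (Nat.descFactorial (m + 1) (k + 1)) with h | h
      · exact absurd (Nat.descFactorial_eq_zero_iff_lt.mp h) (by omega)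
      · exact h
    set d := Nat.descFactorial (m + 1) (k + 1) with hd_def
    have hD : Nat.descFactorial (m + 2) (k + 2) = (m + 2) * d := by
      rw [hd_def, Nat.succ_descFactorial_succ]
    set D := Nat.descFactorial (m + 2) (k + 2) with hD_def
    set t := (β + 1) * d with ht_def
    have ht : 1 ≤ t := Nat.one_le_iff_ne_zero.mpr (by positivity)
    have h1 : β * D + D = t * (m + 2) := by rw [hD, ht_def]; ring
    have h2 : (t - 1) * (m + 2) = t * (m + 2) - (m + 2) := by
      rw [Nat.sub_mul, one_mul]
    have h3 : m + 2 ≤ t * (m + 2) := Nat.le_mul_of_pos_left _ ht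
    have hα : β * D + D - 1 = (m + 2) * (t - 1) + (m + 1) := by
      rw [Nat.mul_comm (m + 2)]; omega
    have htd : t - 1 = β * d + d - 1 := by
      have : t = β * d + d := by rw [ht_def]; ring
      omega
    rw [w, hα, Nat.mul_add_div (by omega), Nat.mul_add_mod,
      Nat.mod_eq_of_lt (by omega : m + 1 < m + 2),
      Nat.div_eq_of_lt (by omega : m + 1 < m + 2)]
    simp only [Nat.add_zero]
    rw [htd, hih]
    have hrot := rotate_last
      ((List.range' (m + 1 - (k + 1)) (k + 1)).reverse ++ w (m + 1 - (k + 1)) β) (m + 1)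
    have hlen : ((List.range' (m + 1 - (k + 1)) (k + 1)).reverse ++
        w (m + 1 - (k + 1)) β).length = m + 1 := by
      simp [w_length]; omega
    rw [hlen] at hrot
    rw [hrot]
    have hr : List.range' (m + 2 - (k + 1 + 1)) (k + 1 + 1) =
        List.range' (m + 1 - (k + 1)) (k + 1) ++ [m + 1] := by
      rw [List.range'_concat, show m + 2 - (k + 1 + 1) = m + 1 - (k + 1) from by omega,
        show m + 1 - (k + 1) + 1 * (k + 1) = m + 1 from by omega]
    rw [hr]
    simp [show m + 2 - (k + 1 + 1) = m + 1 - (k + 1) by omega]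

theorem last_element_of_k_orbit (n : ℕ) (hn : 2 ≤ n) (k : ℕ) (hk1 : 1 ≤ k) (hk2 : k ≤ n - 1)
    (β : ℕ) (hβ : β < (n - k).factorial) :
    w n (β * Nat.descFactorial n k + Nat.descFactorial n k - 1) =
      (List.range' (n - k) k).reverse ++ w (n - k) β := by
  obtain ⟨j, rfl⟩ : ∃ j, k = j + 1 := ⟨k - 1, by omega⟩
  exact main_aux j n β hn (by omega) hβ
end

section
/- For every n ≥ 1 and all natural numbers α, α' < n!, the permutations w(n,α) and w(n,α') are mirror images of one another if and only if α + α' = n! - 1; that is, α + α' = n! - 1 ↔ w(n,α') = List.reverse (w(n,α)). -/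
set_option maxHeartbeats 1000000

lemma rot_rev (x : ℕ) (u : List ℕ) (r : ℕ) (hr : r ≤ u.length) :
    ((u ++ [x]).rotate r).reverse = (u.reverse ++ [x]).rotate (u.length - r) := by
  rw [List.rotate_eq_drop_append_take (by simp; omega),
      List.rotate_eq_drop_append_take (by simp; omega),
      List.take_append_of_le_length hr, List.drop_append_of_le_length hr,
      List.drop_append_of_le_length (by simp), List.take_append_of_le_length (by simp)]
  have h1 : List.drop (u.length - r) u.reverse = (List.take r u).reverse := by
    rw [List.reverse_take]
  have h2 : List.take (u.length - r) u.reverse = (List.drop r u).reverse := by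
    rw [List.reverse_drop]
  rw [h1, h2]
  simp

lemma rot_cancel (m : ℕ) (u u' : List ℕ) (r r' : ℕ)
    (hul : u.length = m+1) (hul' : u'.length = m+1)
    (hnd : (List.rotate (u ++ [m+1]) r).Nodup)
    (hr : r < m+2) (hr' : r' < m+2)
    (h : List.rotate (u ++ [m+1]) r = List.rotate (u' ++ [m+1]) r') :
    r = r' ∧ u = u' := by
  have hlen : (List.rotate (u ++ [m+1]) r).length = m + 2 := by simp [hul]
  have key : ∀ (v : List ℕ) (s : ℕ), v.length = m+1 → s < m+2 →
      ∀ (hi : m+1-s < (List.rotate (v ++ [m+1]) s).length),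
      (List.rotate (v ++ [m+1]) s)[m+1-s] = m+1 := by
    intro v s hv hs hi
    rw [List.getElem_rotate]
    have hlen2 : (v ++ [m+1]).length = m+2 := by simp [hv]
    have hmod : (m+1-s+s) % (v ++ [m+1]).length = m+1 := by
      rw [hlen2, show m+1-s+s = m+1 from by omega]
      exact Nat.mod_eq_of_lt (by omega)
    simp only [hmod]
    exact List.getElem_concat_length (by omega) _
  have h1 : (List.rotate (u ++ [m+1]) r)[m+1-r]'(by rw [hlen]; omega) = m+1 :=
    key u r hul hr _
  have h2 : (List.rotate (u ++ [m+1]) r)[m+1-r']'(by rw [hlen]; omega) = m+1 :=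
    (List.getElem_of_eq h _).trans (key u' r' hul' hr' _)
  have hrr : r = r' := by
    have := hnd.getElem_inj_iff.mp (h1.trans h2.symm)
    omega
  subst hrr
  have huu : u ++ [m+1] = u' ++ [m+1] := List.rotate_injective r h
  exact ⟨rfl, List.append_cancel_right huu⟩

lemma w_perm : ∀ n α, (w (n+1) α).Perm (List.range (n+1)) := by
  intro n
  induction n with
  | zero => intro α; simp [w, List.range_succ]
  | succ m ih =>
    intro α
    show (List.rotate (w (m + 1) (α / (m + 2)) ++ [m + 1]) (α % (m + 2))).Perm _
    refine ((List.rotate_perm _ _).trans ?_)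
    rw [List.range_succ]
    exact (ih _).append_right _

lemma w_len (n α : ℕ) : (w (n+1) α).length = n+1 := by
  simpa using (w_perm n α).length_eq

lemma mul_split (a b c k : ℕ) (hc : c = a + b + 1) :
    k * c = k * a + k * b + k := by subst hc; ring

lemma w_rev : ∀ n, ∀ α < (n+1).factorial,
    w (n+1) ((n+1).factorial - 1 - α) = (w (n+1) α).reverse := by
  intro n
  induction n with
  | zero =>
    intro α hα
    simp [Nat.factorial] at hα
    subst hα
    simp [w]
  | succ m ih =>
    intro α hα
    set F := (m+1).factorial with hF
    have hFpos : 0 < F := Nat.factorial_pos _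
    have hfac : (m+2).factorial = (m+2) * F := by rw [hF, Nat.factorial_succ]
    have hα2 : α < (m+2) * F := by
      have h0 : α < (m+2).factorial := hα
      rwa [hfac] at h0
    have hdm : (m+2) * (α / (m+2)) + α % (m+2) = α := Nat.div_add_mod _ _
    have hrlt : α % (m+2) < m+2 := Nat.mod_lt _ (by omega)
    have hqlt : α / (m+2) < F := (Nat.div_lt_iff_lt_mul (by omega)).mpr
      (by rw [mul_comm]; exact hα2)
    set q := α / (m+2)
    set r := α % (m+2)
    have e1 : (m+2) * F = (m+2) * q + (m+2) * (F - 1 - q) + (m+2) :=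
      mul_split q (F - 1 - q) F (m+2) (by omega)
    have hβ : (m+2).factorial - 1 - α = (m+2) * (F - 1 - q) + (m + 1 - r) := by
      rw [hfac]; omega
    have hβd : ((m+2).factorial - 1 - α) / (m+2) = F - 1 - q := by
      rw [hβ, Nat.mul_add_div (by omega), Nat.div_eq_of_lt (by omega), Nat.add_zero]
    have hβm : ((m+2).factorial - 1 - α) % (m+2) = m + 1 - r := by
      rw [hβ, Nat.mul_add_mod, Nat.mod_eq_of_lt (by omega)]
    show List.rotate (w (m + 1) (((m+2).factorial - 1 - α) / (m+2)) ++ [m + 1])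
        (((m+2).factorial - 1 - α) % (m+2)) =
      (List.rotate (w (m + 1) q ++ [m + 1]) r).reverse
    rw [hβd, hβm, ih q hqlt, rot_rev _ _ _ (by rw [w_len]; omega), w_len]

lemma w_inj : ∀ n, ∀ α < (n+1).factorial, ∀ α' < (n+1).factorial,
    w (n+1) α = w (n+1) α' → α = α' := by
  intro n
  induction n with
  | zero =>
    intro α hα α' hα' _
    simp [Nat.factorial] at hα hα'
    omega
  | succ m ih =>
    intro α hα α' hα' h
    have hFpos : 0 < (m+1).factorial := Nat.factorial_pos _
    have hfac : (m+2).factorial = (m+2) * (m+1).factorial := Nat.factorial_succ _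
    have hα2 : α < (m+2) * (m+1).factorial := by
      have h0 : α < (m+2).factorial := hα
      rwa [hfac] at h0
    have hα2' : α' < (m+2) * (m+1).factorial := by
      have h0 : α' < (m+2).factorial := hα'
      rwa [hfac] at h0
    have hdm : (m+2) * (α / (m+2)) + α % (m+2) = α := Nat.div_add_mod _ _
    have hdm' : (m+2) * (α' / (m+2)) + α' % (m+2) = α' := Nat.div_add_mod _ _
    have hrlt : α % (m+2) < m+2 := Nat.mod_lt _ (by omega)
    have hrlt' : α' % (m+2) < m+2 := Nat.mod_lt _ (by omega)
    have hqlt : α / (m+2) < (m+1).factorial :=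
      (Nat.div_lt_iff_lt_mul (by omega)).mpr (by rw [mul_comm]; exact hα2)
    have hqlt' : α' / (m+2) < (m+1).factorial :=
      (Nat.div_lt_iff_lt_mul (by omega)).mpr (by rw [mul_comm]; exact hα2')
    have h' : List.rotate (w (m+1) (α / (m+2)) ++ [m+1]) (α % (m+2)) =
        List.rotate (w (m+1) (α' / (m+2)) ++ [m+1]) (α' % (m+2)) := h
    have hnd : (List.rotate (w (m+1) (α / (m+2)) ++ [m+1]) (α % (m+2))).Nodup := by
      refine (((List.rotate_perm _ _).trans ?_).nodup_iff).mpr (List.nodup_range (n := m+2))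
      rw [List.range_succ]
      exact (w_perm m _).append_right _
    obtain ⟨hrr, huu⟩ := rot_cancel m _ _ _ _ (w_len _ _) (w_len _ _) hnd hrlt hrlt' h'
    have hqq : α / (m+2) = α' / (m+2) := ih _ hqlt _ hqlt' huu
    have : (m+2) * (α / (m+2)) = (m+2) * (α' / (m+2)) := by rw [hqq]
    omega

theorem mirror_image (n : ℕ) (hn : 1 ≤ n) (α α' : ℕ)
    (hα : α < n.factorial) (hα' : α' < n.factorial) :
    α + α' = n.factorial - 1 ↔ w n α' = (w n α).reverse := by
  obtain ⟨k, rfl⟩ : ∃ k, n = k + 1 := ⟨n - 1, by omega⟩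
  have hFpos : 0 < (k+1).factorial := Nat.factorial_pos _
  constructor
  · intro h
    have hh : α' = (k+1).factorial - 1 - α := by omega
    rw [hh]
    exact w_rev k α hα
  · intro h
    have h2 : w (k+1) α' = w (k+1) ((k+1).factorial - 1 - α) :=
      h.trans (w_rev k α hα).symm
    have := w_inj k α' hα' ((k+1).factorial - 1 - α) (by omega) h2
    omega
end

section
/- For every n ≥ 2 and every natural number α with 0 ≤ α ≤ n! - 2, one has e(n, α) = e(n, n! - 2 - α); that is, the ϖ-ruler sequence (e(n,0), e(n,1), …, e(n,n!-2)) is a palindrome. -/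
lemma findGreatest_congr (P Q : ℕ → Prop) [DecidablePred P] [DecidablePred Q] (b : ℕ)
    (h : ∀ k ≤ b, (P k ↔ Q k)) : Nat.findGreatest P b = Nat.findGreatest Q b := by
  induction b with
  | zero => rfl
  | succ b ih =>
    rw [Nat.findGreatest_succ, Nat.findGreatest_succ]
    by_cases hp : P (b + 1)
    · rw [if_pos hp, if_pos ((h _ le_rfl).1 hp)]
    · rw [if_neg hp, if_neg (fun hq => hp ((h _ le_rfl).2 hq))]
      exact ih fun k hk => h k (hk.trans b.le_succ)

/-- The weight `e n α`: `k + 1` where `k` is the largest element of `{0, …, n-2}`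
such that `ϖ(n,k)` divides `α + 1`. -/
def e (n α : ℕ) : ℕ :=
  Nat.findGreatest (fun k => Nat.descFactorial n k ∣ (α + 1)) (n - 2) + 1

theorem ruler_sequence_palindrome (n : ℕ) (hn : 2 ≤ n) (α : ℕ) (hα : α ≤ n.factorial - 2) :
    e n α = e n (n.factorial - 2 - α) := by
  have h2 : 2 ≤ n.factorial := le_trans hn (Nat.self_le_factorial n)
  have hβ : n.factorial - 2 - α + 1 = n.factorial - (α + 1) := by omega
  have hα1 : α + 1 ≤ n.factorial := by omega
  unfold e
  rw [hβ]
  congr 1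
  apply findGreatest_congr
  intro k hk
  have hkn : k ≤ n := by omega
  have hdvd : Nat.descFactorial n k ∣ n.factorial :=
    ⟨(n - k).factorial, by rw [Nat.mul_comm]; exact (Nat.factorial_mul_descFactorial hkn).symm⟩
  constructor
  · intro h; exact Nat.dvd_sub hdvd h
  · intro h
    have := Nat.dvd_sub hdvd h
    rwa [Nat.sub_sub_self hα1] at this
end

section
/- For every n ≥ 2 and every k with 1 ≤ k ≤ n-1, the number of natural numbers α with 0 ≤ α ≤ n!-2 and e(n,α) = k equals (n-k)·(n-k)!. -/
lemma desc_dvd {n i j : ℕ} (h : i ≤ j) : Nat.descFactorial n i ∣ Nat.descFactorial n j :=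
  Dvd.intro_left _ (Nat.descFactorial_mul_descFactorial h)

lemma card_filter_dvd (N d : ℕ) :
    ((Finset.range N).filter (fun α => d ∣ α + 1)).card = N / d := by
  rw [← Nat.Ioc_filter_dvd_card_eq_div]
  apply Finset.card_bij (fun α _ => α + 1)
  · intro a ha
    simp only [Finset.mem_filter, Finset.mem_range] at ha
    simp only [Finset.mem_filter, Finset.mem_Ioc]
    omega
  · intro a ha b hb hab; omega
  · intro b hb
    simp only [Finset.mem_filter, Finset.mem_Ioc] at hb
    refine ⟨b - 1, ?_, by omega⟩
    simp only [Finset.mem_filter, Finset.mem_range]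
    constructor
    · omega
    · have : b - 1 + 1 = b := by omega
      rw [this]; exact hb.2

lemma div_pred (d q : ℕ) (hd : 0 < d) (hq : 0 < q) : (d * q - 1) / d = q - 1 := by
  obtain ⟨q', rfl⟩ : ∃ q', q = q' + 1 := ⟨q - 1, by omega⟩
  have h : d * (q' + 1) - 1 = (d - 1) + q' * d := by
    rw [Nat.mul_succ]; have : q' * d = d * q' := Nat.mul_comm _ _; omega
  rw [h, Nat.add_mul_div_right _ _ hd, Nat.div_eq_of_lt (by omega)]
  omega

lemma e_eq_iff (n α k : ℕ) (hn : 2 ≤ n) (hk1 : 1 ≤ k) (hk2 : k ≤ n - 1)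
    (hα : α < n.factorial - 1) :
    e n α = k ↔ (Nat.descFactorial n (k - 1) ∣ α + 1 ∧ ¬ Nat.descFactorial n k ∣ α + 1) := by
  have hnfac : 1 ≤ n.factorial := Nat.one_le_iff_ne_zero.2 (Nat.factorial_ne_zero n)
  have hdnm1 : Nat.descFactorial n (n - 1) = n.factorial := by
    have := Nat.factorial_mul_descFactorial (n := n) (k := n - 1) (by omega)
    have h1 : n - (n - 1) = 1 := by omega
    rw [h1] at this
    simpa using this
  constructor
  · intro h
    have h' : Nat.findGreatest (fun k => Nat.descFactorial n k ∣ (α + 1)) (n - 2) = k - 1 := by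
      unfold e at h; omega
    rw [Nat.findGreatest_eq_iff] at h'
    obtain ⟨hle, hP, hnot⟩ := h'
    constructor
    · rcases Nat.eq_or_lt_of_le hk1 with h1 | h1
      · simp [← h1]
      · exact hP (by omega)
    · by_cases hkc : k ≤ n - 2
      · exact hnot (by omega) hkc
      · have hk : k = n - 1 := by omega
        rw [hk, hdnm1]
        intro hdvd
        have := Nat.le_of_dvd (by omega) hdvd
        omega
  · rintro ⟨h1, h2⟩
    have h' : Nat.findGreatest (fun k => Nat.descFactorial n k ∣ (α + 1)) (n - 2) = k - 1 := by
      rw [Nat.findGreatest_eq_iff]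
      refine ⟨by omega, fun _ => h1, fun j hj1 hj2 hPj => ?_⟩
      exact h2 ((desc_dvd (show k ≤ j by omega)).trans hPj)
    unfold e; omega

theorem ruler_sequence_count (n : ℕ) (hn : 2 ≤ n) (k : ℕ) (hk1 : 1 ≤ k) (hk2 : k ≤ n - 1) :
    ((Finset.range (n.factorial - 1)).filter (fun α => e n α = k)).card =
      (n - k) * (n - k).factorial := by
  set N := n.factorial - 1 with hN
  have hset : (Finset.range N).filter (fun α => e n α = k) =
      ((Finset.range N).filter (fun α => Nat.descFactorial n (k - 1) ∣ α + 1)) \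
      ((Finset.range N).filter (fun α => Nat.descFactorial n k ∣ α + 1)) := by
    ext α
    simp only [Finset.mem_sdiff, Finset.mem_filter, Finset.mem_range]
    constructor
    · rintro ⟨hα, he⟩
      have := (e_eq_iff n α k hn hk1 hk2 hα).1 he
      tauto
    · rintro ⟨⟨hα, hd1⟩, hd2⟩
      refine ⟨hα, (e_eq_iff n α k hn hk1 hk2 hα).2 ⟨hd1, ?_⟩⟩
      intro hd; exact hd2 ⟨hα, hd⟩
  rw [hset, Finset.card_sdiff_of_subset]
  · rw [card_filter_dvd, card_filter_dvd]
    have hfac : ∀ j, j ≤ n - 1 → N / Nat.descFactorial n j = (n - j).factorial - 1 := by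
      intro j hj
      have hmul : Nat.descFactorial n j * (n - j).factorial = n.factorial := by
        rw [Nat.mul_comm]; exact Nat.factorial_mul_descFactorial (by omega)
      have hd : 0 < Nat.descFactorial n j := by
        rcases Nat.eq_zero_or_pos (Nat.descFactorial n j) with h0 | h0
        · rw [Nat.descFactorial_eq_zero_iff_lt] at h0; omega
        · exact h0
      have hq : 0 < (n - j).factorial := Nat.factorial_pos _
      rw [hN, ← hmul, div_pred _ _ hd hq]
    rw [hfac (k - 1) (by omega), hfac k hk2]
    have hs : n - (k - 1) = (n - k) + 1 := by omega
    rw [hs, Nat.factorial_succ]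
    have h1 := Nat.factorial_pos (n - k)
    have h2 : (n - k + 1) * (n - k).factorial = (n - k) * (n - k).factorial + (n - k).factorial := by
      ring
    omega
  · apply Finset.monotone_filter_right
    intro α _ hα
    exact (desc_dvd (show k - 1 ≤ k by omega)).trans hα
end

section
/- For every n ≥ 2, the sum of the ϖ-ruler sequence satisfies Σ_{α=0}^{n!-2} e(n,α) = (Σ_{i=1}^{n} i!) - n. -/
lemma descFactorial_dvd' {n k m : ℕ} (h : k ≤ m) :
    Nat.descFactorial n k ∣ Nat.descFactorial n m :=
  Dvd.intro_left _ (Nat.descFactorial_mul_descFactorial h)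

lemma descFactorial_pos' {n k : ℕ} (h : k ≤ n) : 0 < Nat.descFactorial n k :=
  Nat.pos_of_ne_zero fun hz => by
    rw [Nat.descFactorial_eq_zero_iff_lt] at hz; omega

lemma descFactorial_dvd_factorial' {n k : ℕ} (h : k ≤ n) :
    Nat.descFactorial n k ∣ n.factorial :=
  Dvd.intro_left _ (Nat.factorial_mul_descFactorial h)

lemma e_eq_sum (n α : ℕ) (hn : 2 ≤ n) :
    e n α = ∑ k ∈ Finset.range (n - 1),
      (if Nat.descFactorial n k ∣ (α + 1) then 1 else 0) := by
  have hP0 : Nat.descFactorial n 0 ∣ (α + 1) := by simp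
  set K := Nat.findGreatest (fun k => Nat.descFactorial n k ∣ (α + 1)) (n - 2) with hK
  have hPK : Nat.descFactorial n K ∣ (α + 1) :=
    Nat.findGreatest_spec (P := fun k => Nat.descFactorial n k ∣ (α + 1)) (Nat.zero_le _) hP0
  have hKle : K ≤ n - 2 := Nat.findGreatest_le _
  have key : ∀ k ∈ Finset.range (n - 1),
      (if Nat.descFactorial n k ∣ (α + 1) then (1:ℕ) else 0) =
        if k ∈ Finset.range (K + 1) then 1 else 0 := by
    intro k hk
    simp only [Finset.mem_range, Nat.lt_succ_iff] at hk ⊢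
    by_cases h : k ≤ K
    · rw [if_pos ((descFactorial_dvd' h).trans hPK), if_pos h]
    · rw [if_neg h, if_neg]
      exact Nat.findGreatest_is_greatest (P := fun j => Nat.descFactorial n j ∣ (α + 1))
        (show K < k by omega) (show k ≤ n - 2 by omega)
  calc e n α = K + 1 := rfl
    _ = ∑ k ∈ Finset.range (n - 1), (if k ∈ Finset.range (K + 1) then (1:ℕ) else 0) := by
        rw [Finset.sum_ite_mem, Finset.inter_eq_right.mpr ?_,
          Finset.sum_const, Finset.card_range, smul_eq_mul, mul_one]
        intro k hk
        simp only [Finset.mem_range] at hk ⊢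
        omega
    _ = ∑ k ∈ Finset.range (n - 1), (if Nat.descFactorial n k ∣ (α + 1) then 1 else 0) :=
        (Finset.sum_congr rfl key).symm

lemma count_dvd (N d : ℕ) (hd : 0 < d) (hdvd : d ∣ N) :
    ∑ α ∈ Finset.range (N - 1), (if d ∣ (α + 1) then 1 else 0) = N / d - 1 := by
  have h1 : ∑ α ∈ Finset.range (N - 1), (if d ∣ (α + 1) then (1:ℕ) else 0)
      = ∑ m ∈ Finset.Ico 1 N, (if d ∣ m then 1 else 0) := by
    rw [Finset.sum_Ico_eq_sum_range]
    exact Finset.sum_congr rfl fun i _ => by rw [Nat.add_comm 1 i]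
  have h2 : Finset.Ico 1 N = Finset.Ioc 0 (N - 1) := by
    ext x; simp only [Finset.mem_Ico, Finset.mem_Ioc]; omega
  rw [h1, h2, ← Finset.sum_filter, Finset.sum_const, smul_eq_mul, mul_one,
    Nat.Ioc_filter_dvd_card_eq_div]
  obtain ⟨q, rfl⟩ := hdvd
  rcases Nat.eq_zero_or_pos q with hq | hq
  · simp [hq]
  obtain ⟨r, rfl⟩ : ∃ r, q = r + 1 := ⟨q - 1, by omega⟩
  have hL : d * (r + 1) - 1 = (d - 1) + d * r := by
    rw [Nat.mul_succ, Nat.add_sub_assoc (by omega : 1 ≤ d), Nat.add_comm]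
  rw [hL, Nat.add_mul_div_left _ _ hd, Nat.div_eq_of_lt (by omega),
    Nat.mul_div_cancel_left _ hd]
  omega

theorem ruler_sequence_sum (n : ℕ) (hn : 2 ≤ n) :
    ∑ α ∈ Finset.range (n.factorial - 1), e n α =
      (∑ i ∈ Finset.Icc 1 n, i.factorial) - n := by
  have hfac : ∀ k, k ≤ n → n.factorial / Nat.descFactorial n k = (n - k).factorial := by
    intro k hk
    rw [← Nat.factorial_mul_descFactorial hk, Nat.mul_div_cancel _ (descFactorial_pos' hk)]
  have step1 : ∑ α ∈ Finset.range (n.factorial - 1), e n α =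
      ∑ k ∈ Finset.range (n - 1), ((n - k).factorial - 1) := by
    calc ∑ α ∈ Finset.range (n.factorial - 1), e n α
        = ∑ α ∈ Finset.range (n.factorial - 1), ∑ k ∈ Finset.range (n - 1),
            (if Nat.descFactorial n k ∣ (α + 1) then 1 else 0) :=
          Finset.sum_congr rfl fun α _ => e_eq_sum n α hn
      _ = ∑ k ∈ Finset.range (n - 1), ∑ α ∈ Finset.range (n.factorial - 1),
            (if Nat.descFactorial n k ∣ (α + 1) then 1 else 0) := Finset.sum_comm
      _ = ∑ k ∈ Finset.range (n - 1), ((n - k).factorial - 1) := by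
          refine Finset.sum_congr rfl fun k hk => ?_
          simp only [Finset.mem_range] at hk
          have hk' : k ≤ n := by omega
          rw [count_dvd _ _ (descFactorial_pos' hk') (descFactorial_dvd_factorial' hk'),
            hfac k hk']
  have step2 : ∑ k ∈ Finset.range (n - 1), (n - k).factorial =
      ∑ i ∈ Finset.Icc 2 n, i.factorial := by
    have h : Finset.Icc 2 n = Finset.Ico 2 (n + 1) := by
      ext x; simp only [Finset.mem_Icc, Finset.mem_Ico]; omega
    rw [h, Finset.sum_Ico_eq_sum_range, show n + 1 - 2 = n - 1 from by omega,
      ← Finset.sum_range_reflect]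
    refine Finset.sum_congr rfl fun i hi => ?_
    simp only [Finset.mem_range] at hi
    congr 1; omega
  have hsum : ∑ k ∈ Finset.range (n - 1), (n - k).factorial =
      ∑ k ∈ Finset.range (n - 1), ((n - k).factorial - 1) + (n - 1) := by
    calc ∑ k ∈ Finset.range (n - 1), (n - k).factorial
        = ∑ k ∈ Finset.range (n - 1), (((n - k).factorial - 1) + 1) :=
          Finset.sum_congr rfl fun k _ =>
            (Nat.succ_pred_eq_of_pos (Nat.factorial_pos _)).symm
      _ = ∑ k ∈ Finset.range (n - 1), ((n - k).factorial - 1) + (n - 1) := by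
          rw [Finset.sum_add_distrib, Finset.sum_const, Finset.card_range, smul_eq_mul, mul_one]
  have hIcc : ∑ i ∈ Finset.Icc 1 n, i.factorial =
      1 + ∑ i ∈ Finset.Icc 2 n, i.factorial := by
    have h : Finset.Icc 1 n = insert 1 (Finset.Icc 2 n) := by
      ext x; simp only [Finset.mem_Icc, Finset.mem_insert]; omega
    rw [h, Finset.sum_insert (by simp)]
    simp [Nat.factorial]
  omega
end

section
/- For every n ≥ 2, every j with 1 ≤ j ≤ n-1, and every list p that is a permutation of List.range n, the number of lists p' that are permutations of List.range n and satisfy List.drop j p = List.take (n-j) p' equals j!. (Each vertex of the overlap digraph G_n has exactly j! out-arcs of weight j.) -/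
theorem out_arcs_count (n : ℕ) (hn : 2 ≤ n) (j : ℕ) (hj1 : 1 ≤ j) (hj2 : j ≤ n - 1)
    (p : List ℕ) (hp : p.Perm (List.range n)) :
    {p' : List ℕ | p'.Perm (List.range n) ∧ List.drop j p = List.take (n - j) p'}.ncard =
      j.factorial := by
  have hlen : p.length = n := by simpa using hp.length_eq
  have hjn : j ≤ n := le_trans hj2 (Nat.sub_le n 1)
  set s := List.drop j p with hs
  set r := List.take j p with hr
  have hslen : s.length = n - j := by simp [hs, hlen]
  have hrlen : r.length = j := by simp [hr, hlen, hjn]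
  have hrs : r ++ s = p := List.take_append_drop j p
  have hSet : {p' : List ℕ | p'.Perm (List.range n) ∧ s = List.take (n - j) p'}
      = (fun t => s ++ t) '' {t | t.Perm r} := by
    ext p'
    simp only [Set.mem_setOf_eq, Set.mem_image]
    constructor
    · rintro ⟨hperm, htake⟩
      have hdecomp : p' = s ++ List.drop (n - j) p' := by
        conv_lhs => rw [← List.take_append_drop (n - j) p', ← htake]
      refine ⟨List.drop (n - j) p', ?_, hdecomp.symm⟩
      have h1 : (s ++ List.drop (n - j) p').Perm (r ++ s) := by
        rw [← hdecomp, hrs]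
        exact hperm.trans hp.symm
      have h2 : (s ++ List.drop (n - j) p').Perm (s ++ r) :=
        h1.trans List.perm_append_comm
      exact (List.perm_append_left_iff s).mp h2
    · rintro ⟨t, ht, rfl⟩
      constructor
      · have h1 : (s ++ t).Perm (s ++ r) := (List.perm_append_left_iff s).mpr ht
        refine h1.trans ?_
        exact (List.perm_append_comm.trans (by rw [hrs])).trans hp
      · rw [List.take_append_of_le_length (by omega), ← hslen, List.take_length]
  rw [hSet, Set.ncard_image_of_injective _ (fun a b h => List.append_cancel_left h)]
  have hrset : {t : List ℕ | t.Perm r} = ↑r.permutations.toFinset := by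
    ext t
    simp [List.mem_permutations]
  rw [hrset, Set.ncard_coe_finset]
  have hrnodup : r.Nodup :=
    ((hp.nodup_iff).mpr (List.nodup_range (n := n))).sublist (List.take_sublist j p)
  rw [List.toFinset_card_of_nodup (List.nodup_permutations r hrnodup),
    List.length_permutations, hrlen]
end

section
/- For every n ≥ 2, every j with 1 ≤ j ≤ n-1, and every list p that is a permutation of List.range n, the number of lists p' that are permutations of List.range n and satisfy List.drop j p' = List.take (n-j) p equals j!. (Each vertex of the overlap digraph G_n has exactly j! in-arcs of weight j.) -/
lemma perm_set_ncard {s : List ℕ} (hs : s.Nodup) :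
    {l : List ℕ | l.Perm s}.ncard = s.length.factorial := by
  have h : {l : List ℕ | l.Perm s} = ↑s.permutations.toFinset := by
    ext l; simp [List.mem_permutations]
  rw [h, Set.ncard_coe_finset,
    List.toFinset_card_of_nodup (List.nodup_permutations s hs),
    List.length_permutations]

theorem in_arcs_count (n : ℕ) (hn : 2 ≤ n) (j : ℕ) (hj1 : 1 ≤ j) (hj2 : j ≤ n - 1)
    (p : List ℕ) (hp : p.Perm (List.range n)) :
    {p' : List ℕ | p'.Perm (List.range n) ∧ List.drop j p' = List.take (n - j) p}.ncard =
      j.factorial := by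
  have hjn : j ≤ n := le_trans hj2 (Nat.sub_le n 1)
  have hplen : p.length = n := by rw [hp.length_eq, List.length_range]
  set t := List.take (n - j) p with ht
  set s := List.drop (n - j) p with hs
  have hts : t ++ s = p := List.take_append_drop _ p
  have hslen : s.length = j := by
    rw [hs, List.length_drop, hplen, Nat.sub_sub_self hjn]
  have hpnd : p.Nodup := hp.nodup_iff.mpr List.nodup_range
  have hsnd : s.Nodup := hpnd.drop
  have himg : {p' : List ℕ | p'.Perm (List.range n) ∧ List.drop j p' = t} =
      (fun l => l ++ t) '' {l : List ℕ | l.Perm s} := by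
    ext p'
    constructor
    · rintro ⟨h1, h2⟩
      refine ⟨List.take j p', ?_, ?_⟩
      · have hpp : p'.Perm (t ++ s) := by
          rw [hts]; exact h1.trans hp.symm
        have heq : List.take j p' ++ t = p' := by
          rw [← h2]; exact List.take_append_drop _ _
        have : (List.take j p' ++ t).Perm (s ++ t) := by
          rw [heq]; exact hpp.trans List.perm_append_comm
        exact (List.perm_append_right_iff t).mp this
      · simp only
        have hlen : (List.take j p').length = j := by
          rw [List.length_take, h1.length_eq, List.length_range]
          exact min_eq_left hjn
        rw [← h2, ← List.take_append_drop j p']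
        congr 1 <;> simp [hlen]
    · rintro ⟨l, hl, rfl⟩
      have hllen : l.length = j := by rw [hl.length_eq, hslen]
      constructor
      · have : (l ++ t).Perm p := by
          rw [← hts]
          exact (hl.append_right t).trans List.perm_append_comm
        exact this.trans hp
      · rw [← hllen, List.drop_left]
  rw [himg, Set.ncard_image_of_injective _ (List.append_left_injective t),
    perm_set_ncard hsnd, hslen]
end
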